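/- Let G₁, G₂ be locally finite simple graphs, x ∈ V₁, y ∈ V₂, and N₁, N₂ ∈ (0,∞]. Then the Cartesian product satisfies K_{G₁×G₂,(x,y)}(N₁+N₂) ≥ min{K_{G₁,x}(N₁), K_{G₂,y}(N₂)}. -/

import Mathlib

open Finset Filter Topology ENNReal SimpleGraph

noncomputable instance (priority := low) finLocFin {V : Type*} [Finite V] (G : SimpleGraph V) :
    G.LocallyFinite := fun _ => Fintype.ofFinite _

/-- Non-normalized graph Laplacian. -/
noncomputable def lap {V : Type*} (G : SimpleGraph V) [G.LocallyFinite] (f : V → ℝ) (x : V) : ℝ :=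
  ∑ y ∈ G.neighborFinset x, (f y - f x)

/-- Bakry–Émery Γ operator. -/
noncomputable def gam {V : Type*} (G : SimpleGraph V) [G.LocallyFinite] (f g : V → ℝ) (x : V) : ℝ :=
  (lap G (fun v => f v * g v) x - f x * lap G g x - g x * lap G f x) / 2

/-- Bakry–Émery Γ₂ operator. -/
noncomputable def gam2 {V : Type*} (G : SimpleGraph V) [G.LocallyFinite] (f g : V → ℝ) (x : V) : ℝ :=
  (lap G (gam G f g) x - gam G f (lap G g) x - gam G (lap G f) g x) / 2

/-- The coefficient 1/N for N ∈ (0,∞], with 1/∞ = 0. -/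
noncomputable def invN (N : ℝ≥0∞) : ℝ := (N⁻¹).toReal

/-- The vertex `x` satisfies the curvature-dimension inequality CD(K,N). -/
def CD {V : Type*} (G : SimpleGraph V) [G.LocallyFinite] (K : ℝ) (N : ℝ≥0∞) (x : V) : Prop :=
  ∀ f : V → ℝ, gam2 G f f x ≥ invN N * (lap G f x) ^ 2 + K * gam G f f x

/-! On the Cartesian product, `Δ` and `Γ` at `(x, y)` are the sums of their values on the two
coordinate slices through `(x, y)`, while `Γ₂` is the sum of the two slice `Γ₂`'s plus half the sum
of the squared mixed differences `F (v, w) - F (v, y) - F (x, w) + F (x, y)` over neighbours `v ~ x`,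
`w ~ y`. Dropping that nonnegative term, adding the two slice inequalities and using
`(a + b)² / (N₁ + N₂) ≤ a² / N₁ + b² / N₂` gives `CD(K, N₁ + N₂)`; since `Γ ≥ 0`, both slices
satisfy their inequality with `K = min k₁ k₂`. -/

section Laplacian

variable {V : Type*} (G : SimpleGraph V) [G.LocallyFinite]

lemma lap_add (f g : V → ℝ) (x : V) :
    lap G (fun v => f v + g v) x = lap G f x + lap G g x := by
  simp only [lap, ← sum_add_distrib]
  exact sum_congr rfl fun _ _ => by ring

lemma gam_eq_sum (f g : V → ℝ) (x : V) :
    gam G f g x = (∑ v ∈ G.neighborFinset x, (f v - f x) * (g v - g x)) / 2 := by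
  simp only [gam, lap, mul_sum, ← sum_sub_distrib]
  congr 1
  exact sum_congr rfl fun _ _ => by ring

lemma gam_comm (f g : V → ℝ) (x : V) : gam G f g x = gam G g f x := by
  simp only [gam_eq_sum, mul_comm]

lemma gam_add_right (f g h : V → ℝ) (x : V) :
    gam G f (fun v => g v + h v) x = gam G f g x + gam G f h x := by
  simp only [gam_eq_sum, ← add_div, ← sum_add_distrib]
  congr 1
  exact sum_congr rfl fun _ _ => by ring

lemma gam_self_nonneg (f : V → ℝ) (x : V) : 0 ≤ gam G f f x := by
  rw [gam_eq_sum]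
  exact div_nonneg (sum_nonneg fun _ _ => mul_self_nonneg _) zero_le_two

lemma gam2_self (f : V → ℝ) (x : V) :
    gam2 G f f x = lap G (gam G f f) x / 2 - gam G f (lap G f) x := by
  rw [gam2, gam_comm G (lap G f)]
  ring

lemma CD.mono {K K' : ℝ} {N : ℝ≥0∞} {x : V} (h : CD G K N x) (hK : K' ≤ K) : CD G K' N x :=
  fun f => (h f).trans' <| by gcongr; exact gam_self_nonneg G f x

end Laplacian

lemma invN_eq_inv_toReal (N : ℝ≥0∞) : invN N = N.toReal⁻¹ := by
  rw [invN, ENNReal.toReal_inv]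

lemma invN_add_mul_sq_le {N₁ N₂ : ℝ≥0∞} (hN₁ : 0 < N₁) (hN₂ : 0 < N₂) (a b : ℝ) :
    invN (N₁ + N₂) * (a + b) ^ 2 ≤ invN N₁ * a ^ 2 + invN N₂ * b ^ 2 := by
  simp only [invN_eq_inv_toReal]
  rcases eq_or_ne N₁ ⊤ with rfl | hN₁top
  · simp only [top_add, ENNReal.toReal_top, _root_.inv_zero, zero_mul, zero_add]
    positivity
  rcases eq_or_ne N₂ ⊤ with rfl | hN₂top
  · simp only [add_top, ENNReal.toReal_top, _root_.inv_zero, zero_mul, add_zero]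
    positivity
  have hp := ENNReal.toReal_pos hN₁.ne' hN₁top
  have hq := ENNReal.toReal_pos hN₂.ne' hN₂top
  have := sq_sum_div_le_sum_sq_div univ ![a, b] (g := ![N₁.toReal, N₂.toReal])
    (by simp [Fin.forall_fin_two, hp, hq])
  simpa [Fin.sum_univ_two, ENNReal.toReal_add hN₁top hN₂top, div_eq_inv_mul] using this

section BoxProd

variable {V₁ V₂ : Type*} (G : SimpleGraph V₁) (H : SimpleGraph V₂)
  [G.LocallyFinite] [H.LocallyFinite]

lemma lap_gam_slice (Φ : V₁ → V₂ → ℝ) (x : V₁) (y : V₂) :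
    lap G (fun v => gam H (Φ v) (Φ v) y) x
      = ∑ v ∈ G.neighborFinset x, ∑ w ∈ H.neighborFinset y,
          ((Φ v w - Φ v y) ^ 2 - (Φ x w - Φ x y) ^ 2) / 2 := by
  simp only [lap, gam_eq_sum, ← sub_div, ← sum_sub_distrib, sum_div, sq]

lemma gam_lap_slice (Φ : V₁ → V₂ → ℝ) (x : V₁) (y : V₂) :
    gam G (fun v => Φ v y) (fun v => lap H (Φ v) y) x
      = ∑ v ∈ G.neighborFinset x, ∑ w ∈ H.neighborFinset y,
          (Φ v y - Φ x y) * ((Φ v w - Φ v y) - (Φ x w - Φ x y)) / 2 := by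
  simp only [lap, gam_eq_sum, sum_div, ← sum_sub_distrib, mul_sum]

variable [(G □ H).LocallyFinite]

lemma lap_boxProd (F : V₁ × V₂ → ℝ) (x : V₁) (y : V₂) :
    lap (G □ H) F (x, y) = lap G (fun v => F (v, y)) x + lap H (fun w => F (x, w)) y := by
  rw [lap, neighborFinset_boxProd, sum_disjUnion, sum_product, sum_product_right]
  simp only [sum_singleton, lap]

lemma gam_boxProd (F Φ : V₁ × V₂ → ℝ) (x : V₁) (y : V₂) :
    gam (G □ H) F Φ (x, y) =
      gam G (fun v => F (v, y)) (fun v => Φ (v, y)) x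
        + gam H (fun w => F (x, w)) (fun w => Φ (x, w)) y := by
  simp only [gam, lap_boxProd]
  ring

lemma gam2_boxProd (F : V₁ × V₂ → ℝ) (x : V₁) (y : V₂) :
    gam2 (G □ H) F F (x, y)
      = gam2 G (fun v => F (v, y)) (fun v => F (v, y)) x
        + gam2 H (fun w => F (x, w)) (fun w => F (x, w)) y
        + (∑ v ∈ G.neighborFinset x, ∑ w ∈ H.neighborFinset y,
            (F (v, w) - F (v, y) - F (x, w) + F (x, y)) ^ 2) / 2 := by
  simp only [gam2_self, gam_boxProd, lap_boxProd, lap_add, gam_add_right]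
  have cross :
      lap G (fun v => gam H (fun w => F (v, w)) (fun w => F (v, w)) y) x
        + lap H (fun w => gam G (fun v => F (v, w)) (fun v => F (v, w)) x) y
        - 2 * gam G (fun v => F (v, y)) (fun v => lap H (fun w => F (v, w)) y) x
        - 2 * gam H (fun w => F (x, w)) (fun w => lap G (fun v => F (v, w)) x) y
      = ∑ v ∈ G.neighborFinset x, ∑ w ∈ H.neighborFinset y,
          (F (v, w) - F (v, y) - F (x, w) + F (x, y)) ^ 2 := by
    rw [lap_gam_slice G H (fun v w => F (v, w)), lap_gam_slice H G (fun w v => F (v, w)),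
      gam_lap_slice G H (fun v w => F (v, w)), gam_lap_slice H G (fun w v => F (v, w)),
      sum_comm (s := H.neighborFinset y), sum_comm (s := H.neighborFinset y)]
    simp only [mul_sum, ← sum_add_distrib, ← sum_sub_distrib]
    exact sum_congr rfl fun v _ => sum_congr rfl fun w _ => by ring
  linarith

theorem CD.boxProd {K : ℝ} {N₁ N₂ : ℝ≥0∞} {x : V₁} {y : V₂} (hN₁ : 0 < N₁) (hN₂ : 0 < N₂)
    (h₁ : CD G K N₁ x) (h₂ : CD H K N₂ y) : CD (G □ H) K (N₁ + N₂) (x, y) := by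
  intro F
  have cross_nonneg : 0 ≤ (∑ v ∈ G.neighborFinset x, ∑ w ∈ H.neighborFinset y,
      (F (v, w) - F (v, y) - F (x, w) + F (x, y)) ^ 2) / 2 := by positivity
  have := invN_add_mul_sq_le hN₁ hN₂ (lap G (fun v => F (v, y)) x) (lap H (fun w => F (x, w)) y)
  rw [ge_iff_le, gam2_boxProd, lap_boxProd, gam_boxProd]
  linarith [h₁ fun v => F (v, y), h₂ fun w => F (x, w)]

end BoxProd

theorem stmt_17 {V₁ V₂ : Type*} (G : SimpleGraph V₁) (H : SimpleGraph V₂)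
    [G.LocallyFinite] [H.LocallyFinite] [(G.boxProd H).LocallyFinite]
    (x : V₁) (y : V₂) (N₁ N₂ : ℝ≥0∞) (hN₁ : 0 < N₁) (hN₂ : 0 < N₂)
    (k₁ k₂ k : ℝ)
    (hg₁ : IsGreatest {K : ℝ | CD G K N₁ x} k₁)
    (hg₂ : IsGreatest {K : ℝ | CD H K N₂ y} k₂)
    (hg : IsGreatest {K : ℝ | CD (G.boxProd H) K (N₁ + N₂) (x, y)} k) :
    min k₁ k₂ ≤ k :=
  hg.2 <| CD.boxProd G H hN₁ hN₂
    (CD.mono G hg₁.1 (min_le_left k₁ k₂)) (CD.mono H hg₂.1 (min_le_right k₁ k₂))
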